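/- Let p > 2 and (A, I) a transversal prism, r ≥ 1. The two multiplicative maps A/I_r² → A/I_r² given by x ↦ x^p, and A/I_r² → A/(φ^r)(I) given by the composite A/I_r² → A/(φ^{r-1})(I) →^{φ} A/(φ^r)(I), agree after composing with the quotients to A/(I_r² + (φ^r)(I)). Hence they glue to a multiplicative map A/I_r² → A/(I_r·I_{r+1}) via the Cartesian square A/(I_r² (φ^r)(I)) ≅ A/I_r² ×_{A/(I_r² + (φ^r)(I))} A/(φ^r)(I). -/

import Mathlib

/-
Write `g s = φ^s(d)`. Then `g (s + 1) = g s ^ p + p * u s` with `u s = φ^s(δ d)` a unit, because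
`p ∈ (d, φ d)` forces `δ d` to be a unit. Inductively each `g i` is a nonzerodivisor with
`A/(g i)` `p`-torsion-free, and for `i < j` one has `g j ≡ p * unit (mod g i)`, so `g j` is a
nonzerodivisor mod `g i`; swapping the roles, `g i` is a nonzerodivisor mod `g j`. Therefore
`I_r² ∩ φ^r(I) = I_r² φ^r(I) = I_r I_{r+1}`, which is the Cartesian square.

Modulo `p`, `g j ≡ d^(p^j)`, which gives `g j ^ (p - 2) ∈ (p, I_j²)`. Substituting into
`p * u j = g (j + 1) - g j ^ p` gives `p ∈ I_{j+1}² + φ^(j+1)(I)` when `p ≥ 3`, hence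
`x^p ≡ φ x`. The multiplicative map sends `a` to a common lift of `a^p mod I_r²` and of
`φ a mod φ^r(I)`.
-/

/-- The `n`-fold composite of a ring endomorphism. -/
def iterHom {A : Type*} [CommRing A] (φ : A →+* A) : ℕ → (A →+* A)
  | 0 => RingHom.id A
  | n + 1 => φ.comp (iterHom φ n)

/-- `prIdeal φ I r = I · φ(I) ⋯ φ^(r-1)(I)` (the ideal `I_r`), with `prIdeal φ I 0 = (1)`. -/
def prIdeal {A : Type*} [CommRing A] (φ : A →+* A) (I : Ideal A) : ℕ → Ideal A
  | 0 => ⊤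
  | n + 1 => prIdeal φ I n * I.map (iterHom φ n)

section

open Ideal Finset

variable {A : Type*} [CommRing A]

theorem isSMulRegular_quotient_span_iff {a c : A} :
    IsSMulRegular (A ⧸ span {c}) a ↔ ∀ x, a * x ∈ span {c} → x ∈ span {c} :=
  isSMulRegular_quotient_iff_mem_of_smul_mem _ _

theorem IsSMulRegular.of_sub_mem {I : Ideal A} {a b : A} (h : IsSMulRegular (A ⧸ I) b)
    (hab : a - b ∈ I) : IsSMulRegular (A ⧸ I) a := by
  have hmk : Ideal.Quotient.mk I a = Ideal.Quotient.mk I b := Ideal.Quotient.eq.2 hab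
  have : (a • · : A ⧸ I → A ⧸ I) = (b • ·) := by
    funext x
    rw [Algebra.smul_def, Algebra.smul_def, Ideal.Quotient.algebraMap_eq, hmk]
  unfold IsSMulRegular
  rwa [this]

theorem IsSMulRegular.quotient_span_swap {a c : A} (hc : IsSMulRegular A c)
    (h : IsSMulRegular (A ⧸ span {c}) a) : IsSMulRegular (A ⧸ span {a}) c := by
  rw [isSMulRegular_quotient_span_iff] at h ⊢
  intro x hx
  obtain ⟨y, hy⟩ := mem_span_singleton.1 hx
  obtain ⟨z, rfl⟩ := mem_span_singleton.1 (h y (mem_span_singleton.2 ⟨x, hy.symm⟩))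
  refine mem_span_singleton.2 ⟨z, hc ?_⟩
  simp only [smul_eq_mul]
  linear_combination hy

theorem IsSMulRegular.of_quotient_span {a c : A} {J : Ideal A} (hJ : IsHausdorff J A)
    (hcJ : c ∈ J) (hc : IsSMulRegular A c) (h : IsSMulRegular (A ⧸ span {c}) a) :
    IsSMulRegular A a := by
  rw [isSMulRegular_quotient_span_iff] at h
  have hpow : ∀ n x, a * x = 0 → x ∈ span {c} ^ n := by
    intro n
    induction n with
    | zero => simp
    | succ n ih =>
      intro x hx
      obtain ⟨y, rfl⟩ := mem_span_singleton.1 (h x (hx ▸ zero_mem _))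
      have hy : a * y = 0 := hc.right_eq_zero_of_smul (by
        rw [smul_eq_mul]; linear_combination hx)
      rw [pow_succ']
      exact mul_mem_mul (mem_span_singleton_self c) (ih y hy)
  refine isSMulRegular_iff_right_eq_zero_of_smul.2 fun x hx => hJ.haus x fun n => ?_
  rw [SModEq.zero, smul_eq_mul, mul_top]
  exact pow_right_mono ((span_singleton_le_iff_mem J).2 hcJ) n (hpow n x hx)

theorem span_inf_span_le_span_mul {a c : A} (h : IsSMulRegular (A ⧸ span {c}) a) :
    span {a} ⊓ span {c} ≤ span {a * c} := by
  rintro z ⟨haz, hcz⟩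
  obtain ⟨x, rfl⟩ := mem_span_singleton.1 haz
  obtain ⟨y, hy⟩ := mem_span_singleton.1 (isSMulRegular_quotient_span_iff.1 h x hcz)
  exact mem_span_singleton.2 ⟨y, by rw [hy, mul_assoc]⟩

theorem IsUnit.add_mem_jacobson_bot {u x : A} (hu : IsUnit u)
    (hx : x ∈ jacobson (⊥ : Ideal A)) : IsUnit (u + x) := by
  obtain ⟨v, rfl⟩ := hu
  have h : (v : A) + x = v * (x * ↑v⁻¹ + 1) := by
    rw [mul_add, mul_one, mul_left_comm, Units.mul_inv, mul_one, add_comm]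
  exact h ▸ v.isUnit.mul (mem_jacobson_bot.1 hx _)

theorem exists_monoidHom_quotient_lift {M : Type*} [Monoid M] (I : Ideal A) (F : A →* M)
    (hF : ∀ a a', a - a' ∈ I → F a = F a') :
    ∃ N : A ⧸ I →* M, ∀ a, N (Ideal.Quotient.mk I a) = F a := by
  have hF' : ∀ a a', Submodule.quotientRel I a a' → F a = F a' :=
    fun a a' h => hF a a' ((Submodule.quotientRel_def I).1 h)
  refine ⟨{ toFun := Quotient.lift F hF', map_one' := F.map_one, map_mul' := ?_ }, fun a => rfl⟩
  rintro ⟨a⟩ ⟨a'⟩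
  exact F.map_mul a a'

theorem exists_monoidHom_quotient_glue (I J K : Ideal A) (hK : I ⊓ J ≤ K) (f₁ f₂ : A →* A)
    (hf₁ : ∀ a a', a - a' ∈ I → f₁ a - f₁ a' ∈ I) (hf₂ : ∀ a a', a - a' ∈ I → f₂ a - f₂ a' ∈ J)
    (hf : ∀ a, f₁ a - f₂ a ∈ I ⊔ J) :
    ∃ N : A ⧸ I →* A ⧸ K, ∀ a, ∃ b, Ideal.Quotient.mk K b = N (Ideal.Quotient.mk I a) ∧
      b - f₁ a ∈ I ∧ b - f₂ a ∈ J := by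
  obtain ⟨b, hb₁, hb₂⟩ : ∃ b : A → A, (∀ a, b a - f₁ a ∈ I) ∧ ∀ a, b a - f₂ a ∈ J := by
    choose y hy z hz hyz using fun a => Submodule.mem_sup.1 (hf a)
    refine ⟨fun a => f₁ a - y a, fun a => by simpa using I.neg_mem (hy a), fun a => ?_⟩
    convert hz a using 1
    linear_combination -hyz a
  have hglue : ∀ a x, x - f₁ a ∈ I → x - f₂ a ∈ J →
      Ideal.Quotient.mk K (b a) = Ideal.Quotient.mk K x := fun a x h₁ h₂ =>
    Ideal.Quotient.eq.2 (hK ⟨by simpa using I.sub_mem (hb₁ a) h₁,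
      by simpa using J.sub_mem (hb₂ a) h₂⟩)
  let F : A →* A ⧸ K :=
    { toFun := fun a => Ideal.Quotient.mk K (b a)
      map_one' := by
        rw [← map_one (Ideal.Quotient.mk K)]
        exact hglue 1 1 (by simp) (by simp)
      map_mul' := fun a a' => by
        rw [← map_mul]
        refine hglue (a * a') _ ?_ ?_ <;> rw [map_mul]
        exacts [I.mul_sub_mul_mem (hb₁ a) (hb₁ a'), J.mul_sub_mul_mem (hb₂ a) (hb₂ a')] }
  obtain ⟨N, hN⟩ := exists_monoidHom_quotient_lift I F fun a a' h => by
    refine (hglue a' _ ?_ ?_).symm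
    · simpa using I.add_mem (hb₁ a) (hf₁ a a' h)
    · simpa using J.add_mem (hb₂ a) (hf₂ a a' h)
  exact ⟨N, fun a => ⟨b a, (hN a).symm, hb₁ a, hb₂ a⟩⟩

def IsFrobeniusSeq (p : ℕ) (g u : ℕ → A) : Prop :=
  ∀ s, g (s + 1) = g s ^ p + p * u s

namespace IsFrobeniusSeq

variable {p : ℕ} {g u : ℕ → A}

theorem apply_mem (hg : IsFrobeniusSeq p g u) {J : Ideal A} (hp : p ≠ 0) (hpJ : (p : A) ∈ J)
    (h0 : g 0 ∈ J) (s : ℕ) : g s ∈ J := by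
  induction s with
  | zero => exact h0
  | succ s ih =>
    rw [hg]
    exact J.add_mem (J.pow_mem_of_mem ih p (Nat.pos_of_ne_zero hp)) (J.mul_mem_right _ hpJ)

theorem exists_isUnit_dvd_sub (hg : IsFrobeniusSeq p g u) (hu : ∀ s, IsUnit (u s))
    (hp : 2 ≤ p) (hpJac : (p : A) ∈ jacobson (⊥ : Ideal A)) {i j : ℕ} (hij : i < j) :
    ∃ w, IsUnit w ∧ g i ∣ g j - p * w := by
  induction j, hij using Nat.le_induction with
  | base => exact ⟨u i, hu i, by rw [hg, add_sub_cancel_right]; exact dvd_pow_self _ (by omega)⟩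
  | succ k _ ih =>
    obtain ⟨w, -, hdvd⟩ := ih
    refine ⟨u k + p * (p ^ (p - 2) * w ^ p),
      (hu k).add_mem_jacobson_bot (mul_mem_right _ _ hpJac), ?_⟩
    have hpp : (p : A) ^ p = p * (p * p ^ (p - 2)) := by
      rw [← pow_succ', ← pow_succ']; congr 1; omega
    have : g (k + 1) - p * (u k + p * (p ^ (p - 2) * w ^ p)) = g k ^ p - (p * w) ^ p := by
      rw [hg, mul_pow, hpp]; ring
    rw [this]
    exact hdvd.trans (sub_dvd_pow_sub_pow _ _ p)

theorem isSMulRegular_quotient_of_lt (hg : IsFrobeniusSeq p g u) (hu : ∀ s, IsUnit (u s))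
    (hp : 2 ≤ p) (hpJac : (p : A) ∈ jacobson (⊥ : Ideal A)) {i j : ℕ}
    (hpi : IsSMulRegular (A ⧸ span {g i}) (p : A)) (hij : i < j) :
    IsSMulRegular (A ⧸ span {g i}) (g j) := by
  obtain ⟨w, hw, hdvd⟩ := hg.exists_isUnit_dvd_sub hu hp hpJac hij
  exact (hpi.mul (hw.isSMulRegular (A ⧸ span {g i}))).of_sub_mem (mem_span_singleton.2 hdvd)

theorem isSMulRegular (hg : IsFrobeniusSeq p g u) (hu : ∀ s, IsUnit (u s)) (hp : 2 ≤ p)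
    {J : Ideal A} (hJ : IsHausdorff J A) (hJac : J ≤ jacobson ⊥) (hpJ : (p : A) ∈ J)
    (h0J : g 0 ∈ J) (h0 : IsSMulRegular A (g 0)) (hp0 : IsSMulRegular (A ⧸ span {g 0}) (p : A))
    (i : ℕ) : IsSMulRegular A (g i) ∧ IsSMulRegular (A ⧸ span {g i}) (p : A) := by
  have hpA : IsSMulRegular A (p : A) := h0.of_quotient_span hJ h0J hp0
  induction i with
  | zero => exact ⟨h0, hp0⟩
  | succ i ih =>
    obtain ⟨hgi, hpi⟩ := ih
    have hgJ := hg.apply_mem (by omega) hpJ h0J i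
    refine ⟨hgi.of_quotient_span hJ hgJ
      (hg.isSMulRegular_quotient_of_lt hu hp (hJac hpJ) hpi i.lt_succ_self), ?_⟩
    refine hpA.quotient_span_swap (((hgi.quotient_span_swap hpi).pow p).of_sub_mem ?_)
    rw [hg, add_sub_cancel_left]
    exact mul_mem_right _ _ (mem_span_singleton_self _)

theorem isSMulRegular_quotient_prod_sq (hg : IsFrobeniusSeq p g u) (hu : ∀ s, IsUnit (u s))
    (hp : 2 ≤ p) {J : Ideal A} (hJ : IsHausdorff J A) (hJac : J ≤ jacobson ⊥)
    (hpJ : (p : A) ∈ J) (h0J : g 0 ∈ J) (h0 : IsSMulRegular A (g 0))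
    (hp0 : IsSMulRegular (A ⧸ span {g 0}) (p : A)) (r : ℕ) :
    IsSMulRegular (A ⧸ span {g r}) ((∏ i ∈ range r, g i) ^ 2) := by
  refine IsSMulRegular.pow 2 (prod_induction _ _ (fun _ _ => IsSMulRegular.mul)
    (IsSMulRegular.one _) fun i hi => ?_)
  obtain ⟨hgi, hpi⟩ := hg.isSMulRegular hu hp hJ hJac hpJ h0J h0 hp0 i
  exact hgi.quotient_span_swap
    (hg.isSMulRegular_quotient_of_lt hu hp (hJac hpJ) hpi (mem_range.1 hi))

theorem pow_sub_two_mem (hg : IsFrobeniusSeq p g u) (hp : 3 ≤ p) (j : ℕ) :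
    g j ^ (p - 2) ∈ span {(p : A), (∏ i ∈ range j, g i) ^ 2} := by
  induction j with
  | zero => exact mem_span_pair.2 ⟨0, g 0 ^ (p - 2), by simp⟩
  | succ j ih =>
    obtain ⟨a, C, hac⟩ := mem_span_pair.1 ih
    obtain ⟨c, hc⟩ := sub_dvd_pow_sub_pow (g (j + 1)) (g j ^ p) (p - 2)
    have hpow : (g j ^ p) ^ (p - 2) = g j ^ (p - 2) * g j ^ 2 * g j ^ (p * (p - 2) - p) := by
      have : p ≤ p * (p - 2) := Nat.le_mul_of_pos_right p (by omega)
      rw [← pow_mul, ← pow_add, ← pow_add]; congr 1; omega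
    refine mem_span_pair.2 ⟨c * u j + a * g j ^ 2 * g j ^ (p * (p - 2) - p),
      C * g j ^ (p * (p - 2) - p), ?_⟩
    rw [hg] at hc ⊢
    rw [prod_range_succ]
    linear_combination -hc - hpow + g j ^ 2 * g j ^ (p * (p - 2) - p) * hac

theorem natCast_mem_span_sq_sup (hg : IsFrobeniusSeq p g u) (hp : 3 ≤ p) {j : ℕ}
    (hu : IsUnit (u j)) (hgJac : g j ∈ jacobson (⊥ : Ideal A)) :
    (p : A) ∈ span {(∏ i ∈ range (j + 1), g i) ^ 2} ⊔ span {g (j + 1)} := by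
  obtain ⟨a, C, hac⟩ := mem_span_pair.1 (hg.pow_sub_two_mem hp j)
  have hw : IsUnit (u j + g j ^ 2 * a) :=
    hu.add_mem_jacobson_bot (mul_mem_right _ _ (pow_mem_of_mem _ hgJac 2 two_pos))
  obtain ⟨w', hw'⟩ := hw.exists_left_inv
  have hgp : g j ^ p = g j ^ 2 * g j ^ (p - 2) := by rw [← pow_add]; congr 1; omega
  have hp_eq : (p : A) = w' * g (j + 1) + -(w' * C) * (∏ i ∈ range (j + 1), g i) ^ 2 := by
    rw [prod_range_succ, hg]
    linear_combination (-(p : A)) * hw' + w' * g j ^ 2 * hac - w' * hgp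
  rw [hp_eq]
  exact add_mem (mem_sup_right (mul_mem_left _ _ (mem_span_singleton_self _)))
    (mem_sup_left (mul_mem_left _ _ (mem_span_singleton_self _)))

end IsFrobeniusSeq

theorem iterHom_succ_apply' (φ : A →+* A) (n : ℕ) (x : A) :
    iterHom φ (n + 1) x = iterHom φ n (φ x) := by
  induction n with
  | zero => rfl
  | succ n ih => exact congrArg φ ih

theorem isFrobeniusSeq_iterHom {p : ℕ} {δ : A → A} {φ : A →+* A}
    (hφ : ∀ x, φ x = x ^ p + p * δ x) (d : A) :
    IsFrobeniusSeq p (fun s => iterHom φ s d) (fun s => iterHom φ s (δ d)) := fun s => by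
  simp only [iterHom_succ_apply', hφ d, map_add, map_pow, map_mul, map_natCast]

theorem prIdeal_span_singleton (φ : A →+* A) (d : A) (n : ℕ) :
    prIdeal φ (span {d}) n = span {∏ i ∈ range n, iterHom φ i d} := by
  induction n with
  | zero => simp [prIdeal]
  | succ n ih =>
    rw [prIdeal, ih, map_span, Set.image_singleton, span_singleton_mul_span_singleton,
      prod_range_succ]

theorem map_prIdeal_le (φ : A →+* A) (I : Ideal A) (n : ℕ) :
    (prIdeal φ I (n + 1)).map φ ≤ I.map (iterHom φ (n + 1)) := by
  rw [show iterHom φ (n + 1) = φ.comp (iterHom φ n) from rfl, ← Ideal.map_map]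
  exact map_mono mul_le_right

theorem isUnit_of_natCast_mem_span_sup {p : ℕ} {d v : A} (hp : p ≠ 0)
    (hdist : (p : A) ∈ span {d} ⊔ span {d ^ p + p * v})
    (hpd : IsSMulRegular (A ⧸ span {d}) (p : A)) (hdJac : d ∈ jacobson (⊥ : Ideal A)) :
    IsUnit v := by
  obtain ⟨y, hy, z, hz, hyz⟩ := Submodule.mem_sup.1 hdist
  obtain ⟨a, rfl⟩ := mem_span_singleton.1 hy
  obtain ⟨b, rfl⟩ := mem_span_singleton.1 hz
  have hdp : d ^ p = d * d ^ (p - 1) := by rw [← pow_succ']; congr 1; omega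
  have h : (p : A) * (1 - v * b) ∈ span {d} :=
    mem_span_singleton.2 ⟨a + d ^ (p - 1) * b, by linear_combination -hyz + b * hdp⟩
  obtain ⟨c, hc⟩ := mem_span_singleton.1 (isSMulRegular_quotient_span_iff.1 hpd _ h)
  have hvb := isUnit_one.add_mem_jacobson_bot (mul_mem_right (-c) _ hdJac)
  rw [show 1 + d * -c = v * b by linear_combination hc] at hvb
  exact isUnit_of_mul_isUnit_left hvb

theorem natCast_mem_prIdeal_sq_sup {p : ℕ} {δ : A → A} {φ : A →+* A} {d : A} (hp : 3 ≤ p)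
    (hφ : ∀ x, φ x = x ^ p + p * δ x) (hJac : span {(p : A)} ⊔ span {d} ≤ jacobson ⊥)
    (hdist : (p : A) ∈ span {d} ⊔ span {φ d}) (hpd : IsSMulRegular (A ⧸ span {d}) (p : A))
    {r : ℕ} (hr : 1 ≤ r) :
    (p : A) ∈ prIdeal φ (span {d}) r ^ 2 ⊔ (span {d}).map (iterHom φ r) := by
  obtain ⟨j, rfl⟩ := Nat.exists_eq_add_of_le' hr
  have hg := isFrobeniusSeq_iterHom hφ d
  have hpJac := hJac (mem_sup_left (mem_span_singleton_self _))
  have hdJac := hJac (mem_sup_right (mem_span_singleton_self _))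
  have hu := isUnit_of_natCast_mem_span_sup (by omega) (hφ d ▸ hdist) hpd hdJac
  rw [prIdeal_span_singleton, span_singleton_pow, map_span, Set.image_singleton]
  exact hg.natCast_mem_span_sq_sup hp (hu.map (iterHom φ j))
    (hg.apply_mem (by omega) hpJac hdJac j)

theorem prIdeal_sq_inf_le {p : ℕ} {δ : A → A} {φ : A →+* A} {d : A} (hp : 2 ≤ p)
    (hφ : ∀ x, φ x = x ^ p + p * δ x) (hH : IsHausdorff (span {(p : A)} ⊔ span {d}) A)
    (hJac : span {(p : A)} ⊔ span {d} ≤ jacobson ⊥)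
    (hdist : (p : A) ∈ span {d} ⊔ span {φ d}) (hpd : IsSMulRegular (A ⧸ span {d}) (p : A))
    (hd : IsSMulRegular A d) (r : ℕ) :
    prIdeal φ (span {d}) r ^ 2 ⊓ (span {d}).map (iterHom φ r) ≤
      prIdeal φ (span {d}) r * prIdeal φ (span {d}) (r + 1) := by
  have hg := isFrobeniusSeq_iterHom hφ d
  have hpJ : (p : A) ∈ span {(p : A)} ⊔ span {d} := mem_sup_left (mem_span_singleton_self _)
  have hdJ : d ∈ span {(p : A)} ⊔ span {d} := mem_sup_right (mem_span_singleton_self _)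
  have hu := isUnit_of_natCast_mem_span_sup (by omega) (hφ d ▸ hdist) hpd (hJac hdJ)
  have hreg := hg.isSMulRegular_quotient_prod_sq (fun s => hu.map (iterHom φ s)) hp hH hJac
    hpJ hdJ hd hpd r
  rw [prIdeal_span_singleton, prIdeal_span_singleton, span_singleton_pow, map_span,
    Set.image_singleton, span_singleton_mul_span_singleton, prod_range_succ, ← mul_assoc, ← sq]
  exact span_inf_span_le_span_mul hreg

end

theorem statement13_general
    (p : ℕ) {A : Type*} [CommRing A]
    (δ : A → A) (φ : A →+* A) (I : Ideal A) (d : A)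
    (hdgen : I = Ideal.span {d}) (hdnz : d ∈ nonZeroDivisors A)
    (hφ : ∀ x : A, φ x = x ^ p + (p : A) * δ x)
    (hcomplete : IsAdicComplete (Ideal.span {(p : A)} ⊔ I) A)
    (hdist : (p : A) ∈ I ⊔ I.map φ)
    (htrans : ∀ x : A ⧸ I, (p : A ⧸ I) * x = 0 → x = 0)
    (hp2 : 2 < p) (r : ℕ) (hr : 1 ≤ r) :
    (∀ a : A, a ^ p - φ a ∈ (prIdeal φ I r) ^ 2 ⊔ I.map (iterHom φ r)) ∧
    ∃ N : (A ⧸ (prIdeal φ I r) ^ 2) →* (A ⧸ (prIdeal φ I r * prIdeal φ I (r + 1))),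
      ∀ a : A, ∃ b : A,
        Ideal.Quotient.mk (prIdeal φ I r * prIdeal φ I (r + 1)) b =
          N (Ideal.Quotient.mk ((prIdeal φ I r) ^ 2) a) ∧
        b - a ^ p ∈ (prIdeal φ I r) ^ 2 ∧ b - φ a ∈ I.map (iterHom φ r) := by
  subst hdgen
  have hJac := IsAdicComplete.le_jacobson_bot (Ideal.span {(p : A)} ⊔ Ideal.span {d})
  have hdist' : (p : A) ∈ Ideal.span {d} ⊔ Ideal.span {φ d} := by
    rwa [Ideal.map_span, Set.image_singleton] at hdist
  have hpd : IsSMulRegular (A ⧸ Ideal.span {d}) (p : A) := by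
    rw [isSMulRegular_iff_right_eq_zero_of_smul]
    simpa [Algebra.smul_def] using htrans
  have hd : IsSMulRegular A d := (isRegular_iff_mem_nonZeroDivisors.2 hdnz).left.isSMulRegular
  have hpow (a : A) :
      a ^ p - φ a ∈ prIdeal φ (Ideal.span {d}) r ^ 2 ⊔ (Ideal.span {d}).map (iterHom φ r) := by
    rw [hφ, sub_add_cancel_left, neg_mem_iff]
    exact Ideal.mul_mem_right _ _ (natCast_mem_prIdeal_sq_sup hp2 hφ hJac hdist' hpd hr)
  obtain ⟨j, rfl⟩ := Nat.exists_eq_add_of_le' hr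
  refine ⟨hpow, exists_monoidHom_quotient_glue _ _ _
    (prIdeal_sq_inf_le hp2.le hφ hcomplete.toIsHausdorff hJac hdist' hpd hd _)
    (powMonoidHom p) φ.toMonoidHom (fun a a' h => ?_) (fun a a' h => ?_) hpow⟩
  · exact Ideal.mem_of_dvd _ (sub_dvd_pow_sub_pow a a' p) h
  · rw [RingHom.toMonoidHom_eq_coe, MonoidHom.coe_coe, ← map_sub]
    exact map_prIdeal_le φ _ j (Ideal.mem_map_of_mem φ (Ideal.pow_le_self two_ne_zero h))

/-- Construction 2.18: for an odd prime `p > 2` and a transversal prism `(A, I)`, `r ≥ 1`,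
the map `x ↦ x^p : A/I_r² → A/I_r²` and the composite `A/I_r² → A/(φ^(r-1))(I) →^φ A/(φ^r)(I)`
agree after passing to `A/(I_r² + (φ^r)(I))` (i.e. `x^p ≡ φ(x)` mod `I_r² + (φ^r)(I)`),
hence glue to a multiplicative map `A/I_r² → A/(I_r·I_{r+1})` via the Cartesian square
`A/(I_r²·(φ^r)(I)) ≅ A/I_r² ×_{A/(I_r² + (φ^r)(I))} A/(φ^r)(I)`. -/
theorem statement13
    (p : ℕ) (hp : p.Prime) {A : Type*} [CommRing A]
    (δ : A → A) (φ : A →+* A) (I : Ideal A) (d : A)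
    (hdgen : I = Ideal.span {d}) (hdnz : d ∈ nonZeroDivisors A)
    (hφ : ∀ x : A, φ x = x ^ p + (p : A) * δ x)
    (hδ1 : δ 1 = 0)
    (hδadd : ∀ x y : A, δ (x + y) =
      δ x + δ y - ∑ i ∈ Finset.Ioo 0 p, ((p.choose i / p : ℕ) : A) * x ^ i * y ^ (p - i))
    (hδmul : ∀ x y : A, δ (x * y) =
      x ^ p * δ y + y ^ p * δ x + (p : A) * δ x * δ y)
    (hcomplete : IsAdicComplete (Ideal.span {(p : A)} ⊔ I) A)
    (hdist : (p : A) ∈ I ⊔ I.map φ)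
    (htrans : ∀ x : A ⧸ I, (p : A ⧸ I) * x = 0 → x = 0)
    (hp2 : 2 < p) (r : ℕ) (hr : 1 ≤ r) :
    (∀ a : A, a ^ p - φ a ∈ (prIdeal φ I r) ^ 2 ⊔ I.map (iterHom φ r)) ∧
    ∃ N : (A ⧸ (prIdeal φ I r) ^ 2) →* (A ⧸ (prIdeal φ I r * prIdeal φ I (r + 1))),
      ∀ a : A, ∃ b : A,
        Ideal.Quotient.mk (prIdeal φ I r * prIdeal φ I (r + 1)) b =
          N (Ideal.Quotient.mk ((prIdeal φ I r) ^ 2) a) ∧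
        b - a ^ p ∈ (prIdeal φ I r) ^ 2 ∧ b - φ a ∈ I.map (iterHom φ r) :=
  statement13_general p δ φ I d hdgen hdnz hφ hcomplete hdist htrans hp2 r hr
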